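/- arXiv:2001.11740 — 2 statements merged into one kernel-verified Lean document; each statement's English description precedes it below -/
import Mathlib

section
/- EXP-SPT holds if and only if lim_{j→∞} λ_j = 0, lim_{j→∞} γ_j = 0, and B := limsup_{ε→0⁺} d(ε)·log j(ε) / log log ε⁻¹ < ∞. Moreover, if these three conditions hold, then the exponent p* of EXP-SPT equals B. -/
open Filter Real Set Topology
open scoped ENNReal NNReal

noncomputable section

/-- The weighted eigenvalues `λ_{k,j}`: `1` if `j = 1`, and `γ_k · λ_j` if `j ≥ 2`. -/
def lamKJ (γ lam : ℕ → ℝ) (k j : ℕ) : ℝ := if j = 1 then 1 else γ k * lam j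

/-- The information complexity `n(ε,d)`: the extended-natural cardinality of the set of
`d`-tuples of positive integers `(n_1,…,n_d)` with `λ_{1,n_1} ⋯ λ_{d,n_d} > ε²`. -/
def infoN (γ lam : ℕ → ℝ) (ε : ℝ) (d : ℕ) : ℕ∞ :=
  {n : Fin d → ℕ | (∀ i, 1 ≤ n i) ∧ ε ^ 2 < ∏ i, lamKJ γ lam (i.1 + 1) (n i)}.encard

/-- EXP-SPT with a given exponent `p`: there is `C ≥ 0` with
`n(ε,d) ≤ C (1 + log ε⁻¹)^p` for all `d ≥ 1` and `ε ∈ (0,1]`. -/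
def ExpSPTwith (γ lam : ℕ → ℝ) (p : ℝ) : Prop :=
  ∃ C : ℝ, 0 ≤ C ∧ ∀ d : ℕ, 1 ≤ d → ∀ ε : ℝ, 0 < ε → ε ≤ 1 →
    (infoN γ lam ε d : ℝ≥0∞) ≤ ENNReal.ofReal (C * (1 + Real.log ε⁻¹) ^ p)

/-- Exponential strong polynomial tractability. -/
def ExpSPT (γ lam : ℕ → ℝ) : Prop := ∃ p : ℝ, 0 ≤ p ∧ ExpSPTwith γ lam p

/-- Exponential polynomial tractability: there are `C, q, p ≥ 0` with
`n(ε,d) ≤ C d^q (1 + log ε⁻¹)^p` for all `d ≥ 1` and `ε ∈ (0,1]`. -/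
def ExpPT (γ lam : ℕ → ℝ) : Prop :=
  ∃ C q p : ℝ, 0 ≤ C ∧ 0 ≤ q ∧ 0 ≤ p ∧ ∀ d : ℕ, 1 ≤ d → ∀ ε : ℝ, 0 < ε → ε ≤ 1 →
    (infoN γ lam ε d : ℝ≥0∞) ≤ ENNReal.ofReal (C * (d : ℝ) ^ q * (1 + Real.log ε⁻¹) ^ p)

/-- EXP-QPT with a given exponent `t`. -/
def ExpQPTwith (γ lam : ℕ → ℝ) (t : ℝ) : Prop :=
  ∃ C : ℝ, 0 ≤ C ∧ ∀ d : ℕ, 1 ≤ d → ∀ ε : ℝ, 0 < ε → ε ≤ 1 →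
    (infoN γ lam ε d : ℝ≥0∞) ≤
      ENNReal.ofReal (C * Real.exp (t * (1 + Real.log d) * (1 + Real.log (1 + Real.log ε⁻¹))))

/-- Exponential quasi-polynomial tractability. -/
def ExpQPT (γ lam : ℕ → ℝ) : Prop := ∃ t : ℝ, 0 ≤ t ∧ ExpQPTwith γ lam t

/-- Exponential `(s,t)`-weak tractability:
`log max(1, n(ε,d)) / (d^t + (1 + log ε⁻¹)^s) → 0` as `d + ε⁻¹ → ∞`
(in particular `n(ε,d)` is finite for all such `d, ε`). -/
def ExpSTWT (γ lam : ℕ → ℝ) (s t : ℝ) : Prop :=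
  ∀ δ : ℝ, 0 < δ → ∃ T : ℝ, ∀ d : ℕ, 1 ≤ d → ∀ ε : ℝ, 0 < ε → ε ≤ 1 →
    T ≤ (d : ℝ) + ε⁻¹ →
    ∃ N : ℕ, infoN γ lam ε d = (N : ℕ∞) ∧
      Real.log (max 1 (N : ℝ)) / ((d : ℝ) ^ t + (1 + Real.log ε⁻¹) ^ s) < δ

/-- `j(ε) = max { j ≥ 1 : λ_j > ε² }` (a well-defined maximum when `λ_j → 0`). -/
def jEps (lam : ℕ → ℝ) (ε : ℝ) : ℕ := sSup {j : ℕ | 1 ≤ j ∧ ε ^ 2 < lam j}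

/-- `d(ε) = max { d ≥ 1 : γ_d > ε² }`, with `d(ε) = 0` if `γ_1 ≤ ε²`
(a well-defined maximum when `γ_d → 0`). -/
def dEps (γ : ℕ → ℝ) (ε : ℝ) : ℕ := sSup {d : ℕ | 1 ≤ d ∧ ε ^ 2 < γ d}

/-!
Write `J = j(ε)`, `D = d(ε)` and `L = log ε⁻¹`. Every factor of a counted tuple exceeds `ε²`
(all factors lie in `[0, 1]`), so the tuples lie in the box `[1, J]^D × {1}^(d - D)` and
`n(ε, d) ≤ J^D = exp (D log J)`, which is at most `L^p` once `D log J ≤ p log L`. Conversely,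
the whole box `[1, J]^D` is counted at accuracy `ε^(2D)`, so EXP-SPT with exponent `p` gives
`J^D ≤ C (1 + 2DL)^p`. As `J ≥ 2`, this forces `D = O(log L)`, and then
`D log J ≤ p log L + O(log log L)`. Finally, if `λ_j` or `γ_j` stays away from `0`, then for a
fixed `ε` either `n(ε, 1) = ∞` or `n(ε, d) ≥ d` for all `d`.
-/

theorem Finset.prod_le_of_mem_Icc {ι R : Type*} [CommSemiring R] [PartialOrder R]
    [IsOrderedRing R] {s : Finset ι} {f : ι → R} (hf : ∀ j ∈ s, f j ∈ Set.Icc 0 1) {i : ι}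
    (hi : i ∈ s) : ∏ j ∈ s, f j ≤ f i := by
  classical
  rw [← Finset.mul_prod_erase s f hi]
  refine mul_le_of_le_one_right (hf i hi).1
    (Finset.prod_le_one (fun j hj => ?_) fun j hj => ?_)
  exacts [(hf j (Finset.mem_of_mem_erase hj)).1, (hf j (Finset.mem_of_mem_erase hj)).2]

theorem tendsto_zero_of_antitoneOn {f : ℕ → ℝ} (hanti : AntitoneOn f (Ici 1))
    (hf : ∀ j, 1 ≤ j → 0 ≤ f j) (h : ∀ c > 0, ∃ j, 1 ≤ j ∧ f j < c) :
    Tendsto f atTop (𝓝 0) := by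
  refine Metric.tendsto_atTop.2 fun c hc => ?_
  obtain ⟨j, hj, hfj⟩ := h c hc
  refine ⟨j, fun n hn => ?_⟩
  rw [Real.dist_0_eq_abs, abs_of_nonneg (hf n (hj.trans hn))]
  exact (hanti hj (hj.trans hn) hn).trans_lt hfj

theorem eventually_sq_lt {a : ℝ} (ha : 0 < a) : ∀ᶠ ε in 𝓝[>] (0 : ℝ), ε ^ 2 < a := by
  have h : Tendsto (fun ε : ℝ => ε ^ 2) (𝓝 0) (𝓝 0) := by
    simpa using (continuous_pow 2).tendsto (0 : ℝ)
  exact (h.mono_left nhdsWithin_le_nhds).eventually (gt_mem_nhds ha)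

theorem tendsto_log_inv_nhdsGT_zero : Tendsto (fun ε : ℝ => log ε⁻¹) (𝓝[>] 0) atTop :=
  tendsto_log_atTop.comp tendsto_inv_nhdsGT_zero

theorem tendsto_log_log_inv_nhdsGT_zero :
    Tendsto (fun ε : ℝ => log (log ε⁻¹)) (𝓝[>] 0) atTop :=
  tendsto_log_atTop.comp tendsto_log_inv_nhdsGT_zero

theorem ENat.toENNReal_le_ofReal {n : ℕ∞} {N : ℕ} {x : ℝ} (hn : n ≤ N) (hx : (N : ℝ) ≤ x) :
    (n : ℝ≥0∞) ≤ ENNReal.ofReal x :=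
  calc (n : ℝ≥0∞) ≤ ((N : ℕ∞) : ℝ≥0∞) := ENat.toENNReal_le.2 hn
    _ = ENNReal.ofReal N := by simp
    _ ≤ ENNReal.ofReal x := ENNReal.ofReal_le_ofReal hx

theorem ENat.natCast_le_of_le_ofReal {n : ℕ∞} {N : ℕ} {x : ℝ} (hN : (N : ℕ∞) ≤ n)
    (hn : (n : ℝ≥0∞) ≤ ENNReal.ofReal x) (hx : 0 ≤ x) : (N : ℝ) ≤ x := by
  rw [← ENNReal.ofReal_le_ofReal_iff hx, ENNReal.ofReal_natCast]
  exact le_of_eq_of_le (by simp) ((ENat.toENNReal_le.2 hN).trans hn)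

theorem natCast_pow_le_rpow_of_mul_log_le {J D : ℕ} {x p : ℝ} (hJ : 1 ≤ J) (hx : 0 < x)
    (h : D * log J ≤ p * log x) : ((J ^ D : ℕ) : ℝ) ≤ x ^ p := by
  have hJD : (0 : ℝ) < (J ^ D : ℕ) := by positivity
  rw [← exp_log hJD, rpow_def_of_pos hx, Nat.cast_pow, log_pow, mul_comm (log x)]
  exact exp_le_exp.2 h

theorem exists_mul_log_one_add_le {p c : ℝ} (hp : 0 ≤ p) (hc : 0 < c) :
    ∃ K, ∀ y, 0 ≤ y → p * log (1 + y) ≤ c * y + K := by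
  set t := c / (p + 1)
  have ht : 0 < t := by positivity
  have hpt : p * t ≤ c := by
    rw [mul_div_assoc', div_le_iff₀ (by linarith)]
    nlinarith
  refine ⟨p * (t - 1 - log t), fun y hy => ?_⟩
  have h := log_le_sub_one_of_pos (mul_pos ht (by linarith : 0 < 1 + y))
  rw [log_mul ht.ne' (by linarith)] at h
  nlinarith [mul_le_mul_of_nonneg_left h hp, mul_le_mul_of_nonneg_right hpt hy]

theorem exists_mul_log_le_of_mul_log_le (C : ℝ) {p : ℝ} (hp : 0 ≤ p) :
    ∃ T, ∀ D J x : ℝ, 0 ≤ D → 2 ≤ J → 1 ≤ x → T ≤ log x →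
      D * log J ≤ log C + p * log (1 + 2 * D * x) →
      D * log J ≤ log C + 2 * p * log (log x) + p * log x := by
  have hlog2 : 0 < log 2 := log_pos one_lt_two
  obtain ⟨K, hK⟩ := exists_mul_log_one_add_le hp (div_pos hlog2 four_pos)
  set a := log 2 + 4 * (log C + K)
  refine ⟨max 1 ((|a| + 4 * p) / log 2), fun D J x hD hJ hx hT h => ?_⟩
  set M := log x
  have hM1 : 1 ≤ M := (le_max_left _ _).trans hT
  have hMa : |a| + 4 * p ≤ log 2 * M := by
    rw [← div_le_iff₀' hlog2]; exact (le_max_right _ _).trans hT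
  have hsplit : log (1 + 2 * D * x) ≤ log (1 + 2 * D) + M := by
    rw [← log_mul (by positivity) (by positivity)]
    exact log_le_log (by positivity) (by nlinarith)
  have hJ2 : D * log 2 ≤ D * log J := mul_le_mul_of_nonneg_left (log_le_log two_pos hJ) hD
  have hKD := hK (2 * D) (by positivity)
  have hDM : log 2 * (1 + 2 * D) ≤ a + 4 * p * M := by
    nlinarith [mul_le_mul_of_nonneg_left hsplit hp]
  have hDsq : 1 + 2 * D ≤ M ^ 2 := by
    refine le_of_mul_le_mul_left (hDM.trans ?_) hlog2
    nlinarith [le_abs_self a, le_mul_of_one_le_right (abs_nonneg a) hM1,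
      mul_le_mul_of_nonneg_right hMa (by positivity : (0 : ℝ) ≤ M)]
  have hlogD : log (1 + 2 * D) ≤ 2 * log M :=
    calc log (1 + 2 * D) ≤ log (M ^ 2) := log_le_log (by positivity) hDsq
      _ = 2 * log M := by rw [log_pow]; norm_num
  nlinarith [mul_le_mul_of_nonneg_left hsplit hp, mul_le_mul_of_nonneg_left hlogD hp]

theorem tendsto_add_mul_log_add_mul_div_atTop (a b p : ℝ) :
    Tendsto (fun y => (a + b * log y + p * y) / y) atTop (𝓝 p) := by
  have h1 : Tendsto (fun y : ℝ => a / y) atTop (𝓝 0) := tendsto_const_nhds.div_atTop tendsto_id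
  have h2 : Tendsto (fun y => log y / y) atTop (𝓝 0) := by
    simpa using isLittleO_log_id_atTop.tendsto_div_nhds_zero
  have h := (h1.add (h2.const_mul b)).add_const p
  rw [mul_zero, add_zero, zero_add] at h
  refine h.congr' ?_
  filter_upwards [eventually_ne_atTop 0] with y hy
  field_simp

section Eigenvalues

variable {γ lam : ℕ → ℝ} {k j : ℕ}

theorem lamKJ_one : lamKJ γ lam k 1 = 1 := if_pos rfl

theorem lamKJ_of_ne_one (hj : j ≠ 1) : lamKJ γ lam k j = γ k * lam j := if_neg hj

theorem lamKJ_mem_Icc (hγ : γ k ∈ Icc 0 1) (hlam : lam j ∈ Icc 0 1) :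
    lamKJ γ lam k j ∈ Icc 0 1 := by
  unfold lamKJ
  split_ifs
  · exact ⟨zero_le_one, le_rfl⟩
  · exact ⟨mul_nonneg hγ.1 hlam.1, mul_le_one₀ hγ.2 hlam.1 hlam.2⟩

end Eigenvalues

-- `dEps γ` is definitionally `jEps γ`, so the lemmas of this section apply to both.
section LevelIndex

variable {f : ℕ → ℝ} {ε : ℝ} {j : ℕ}

theorem bddAbove_setOf_lt (hf : Tendsto f atTop (𝓝 0)) (hε : 0 < ε) :
    BddAbove {j : ℕ | 1 ≤ j ∧ ε ^ 2 < f j} := by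
  obtain ⟨N, hN⟩ := eventually_atTop.1 (hf.eventually (gt_mem_nhds (pow_pos hε 2)))
  exact ⟨N, fun j hj => le_of_not_gt fun hNj => (hN j hNj.le).not_gt hj.2⟩

theorem le_jEps (hf : Tendsto f atTop (𝓝 0)) (hε : 0 < ε) (hj : 1 ≤ j) (h : ε ^ 2 < f j) :
    j ≤ jEps f ε :=
  le_csSup (bddAbove_setOf_lt hf hε) ⟨hj, h⟩

theorem lt_of_le_jEps (hf : Tendsto f atTop (𝓝 0)) (hε : 0 < ε) (hanti : AntitoneOn f (Ici 1))
    (h1 : ε ^ 2 < f 1) (hj : 1 ≤ j) (hle : j ≤ jEps f ε) : ε ^ 2 < f j := by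
  obtain ⟨hJ, hfJ⟩ : 1 ≤ jEps f ε ∧ ε ^ 2 < f (jEps f ε) :=
    Nat.sSup_mem (s := {j : ℕ | 1 ≤ j ∧ ε ^ 2 < f j}) ⟨1, le_rfl, h1⟩ (bddAbove_setOf_lt hf hε)
  exact hfJ.trans_le (hanti hj hJ hle)

end LevelIndex

section Counting

variable {γ lam : ℕ → ℝ} {d : ℕ} {ε ε₁ : ℝ}

theorem infoN_anti (hε₁ : 0 ≤ ε₁) (h : ε₁ ≤ ε) : infoN γ lam ε d ≤ infoN γ lam ε₁ d :=
  Set.encard_le_encard fun _ ⟨hn1, hn⟩ => ⟨hn1, (pow_le_pow_left₀ hε₁ h 2).trans_lt hn⟩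

theorem pow_le_infoN {J : ℕ}
    (h : ∀ n : Fin d → ℕ, (∀ i, n i ∈ Finset.Icc 1 J) →
      ε ^ 2 < ∏ i, lamKJ γ lam (i.1 + 1) (n i)) :
    ((J ^ d : ℕ) : ℕ∞) ≤ infoN γ lam ε d := by
  have hbox : (Fintype.piFinset fun _ : Fin d => Finset.Icc 1 J : Set (Fin d → ℕ)) ⊆
      {n | (∀ i, 1 ≤ n i) ∧ ε ^ 2 < ∏ i, lamKJ γ lam (i.1 + 1) (n i)} := fun n hn => by
    rw [Finset.mem_coe, Fintype.mem_piFinset] at hn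
    exact ⟨fun i => (Finset.mem_Icc.1 (hn i)).1, h n hn⟩
  refine le_of_eq_of_le ?_ (Set.encard_le_encard hbox)
  rw [Set.encard_coe_eq_coe_finsetCard, Fintype.card_piFinset]
  simp

theorem infoN_le_pow_jEps (hlam : Tendsto lam atTop (𝓝 0)) (hγ : Tendsto γ atTop (𝓝 0))
    (hlam01 : ∀ j, 1 ≤ j → lam j ∈ Icc 0 1) (hγ01 : ∀ k, 1 ≤ k → γ k ∈ Icc 0 1)
    (hε : 0 < ε) (h1 : ε ^ 2 < lam 1) (d : ℕ) :
    infoN γ lam ε d ≤ ((jEps lam ε ^ dEps γ ε : ℕ) : ℕ∞) := by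
  set J := jEps lam ε
  set D := dEps γ ε
  have hJ : 1 ≤ J := le_jEps hlam hε le_rfl h1
  let box : Fin d → Finset ℕ := fun i => if (i : ℕ) < D then Finset.Icc 1 J else {1}
  have hsub : {n : Fin d → ℕ | (∀ i, 1 ≤ n i) ∧ ε ^ 2 < ∏ i, lamKJ γ lam (i.1 + 1) (n i)} ⊆
      (Fintype.piFinset box : Set (Fin d → ℕ)) := by
    rintro n ⟨hn1, hn⟩
    rw [Finset.mem_coe, Fintype.mem_piFinset]
    intro i
    have hfac : ε ^ 2 < lamKJ γ lam (i + 1) (n i) := hn.trans_le <|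
      Finset.prod_le_of_mem_Icc
        (fun i _ => lamKJ_mem_Icc (hγ01 _ (by omega)) (hlam01 _ (hn1 i))) (Finset.mem_univ i)
    rcases (hn1 i).eq_or_lt with hni | hni
    · rw [← hni]
      simp only [box]
      split_ifs
      exacts [Finset.mem_Icc.2 ⟨le_rfl, hJ⟩, Finset.mem_singleton_self 1]
    · rw [lamKJ_of_ne_one hni.ne'] at hfac
      obtain ⟨hγ0, hγ1⟩ := hγ01 (i + 1) (by omega)
      obtain ⟨hlam0, hlam1⟩ := hlam01 (n i) (hn1 i)
      have hiD : i + 1 ≤ D :=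
        le_jEps hγ hε (by omega) (hfac.trans_le (mul_le_of_le_one_right hγ0 hlam1))
      have hniJ : n i ≤ J :=
        le_jEps hlam hε (hn1 i) (hfac.trans_le (mul_le_of_le_one_left hlam0 hγ1))
      simp only [box, if_pos (show (i : ℕ) < D by omega), Finset.mem_Icc]
      exact ⟨hn1 i, hniJ⟩
  calc infoN γ lam ε d ≤ (Fintype.piFinset box : Set (Fin d → ℕ)).encard :=
        Set.encard_le_encard hsub
    _ = ((J ^ min d D : ℕ) : ℕ∞) := by
        simp [Set.encard_coe_eq_coe_finsetCard, box, apply_ite Finset.card, Finset.prod_ite,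
          Fin.card_filter_val_lt]
    _ ≤ ((J ^ D : ℕ) : ℕ∞) := by
        exact_mod_cast Nat.pow_le_pow_right hJ (min_le_right d D)

theorem infoN_one_eq_top (h : ∀ j, 2 ≤ j → ε ^ 2 < γ 1 * lam j) : infoN γ lam ε 1 = ⊤ := by
  rw [infoN, Set.encard_eq_top_iff]
  refine Set.infinite_of_injective_forall_mem (f := fun m : ℕ => fun _ : Fin 1 => m + 2)
    (fun a b hab => by simpa using congrFun hab 0) fun m => ⟨fun _ => by simp, ?_⟩
  simpa [lamKJ_of_ne_one] using h (m + 2) (by omega)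

theorem le_infoN_of_lt_mul (h : ∀ k, 1 ≤ k → ε ^ 2 < γ k * lam 2) (d : ℕ) :
    (d : ℕ∞) ≤ infoN γ lam ε d := by
  let e : Fin d → Fin d → ℕ := fun k i => if i = k then 2 else 1
  have hmaps : Set.MapsTo e univ
      {n | (∀ i, 1 ≤ n i) ∧ ε ^ 2 < ∏ i, lamKJ γ lam (i.1 + 1) (n i)} := fun k _ => by
    refine ⟨fun i => by simp only [e]; split_ifs <;> omega, ?_⟩
    rw [Finset.prod_eq_single k (fun i _ hik => by simp [e, hik, lamKJ_one]) (by simp)]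
    simpa [e, lamKJ_of_ne_one] using h (k + 1) (by omega)
  have hinj : Set.InjOn e univ := fun a _ b _ hab => by
    by_contra hne
    simpa [e, hne] using congrFun hab a
  simpa [infoN] using Set.encard_le_encard_of_injOn hmaps hinj

theorem sq_pow_lt_prod_lamKJ (hlam : Tendsto lam atTop (𝓝 0)) (hγ : Tendsto γ atTop (𝓝 0))
    (hlam_anti : AntitoneOn lam (Ici 1)) (hγ_anti : AntitoneOn γ (Ici 1))
    (hε0 : 0 < ε) (hε1 : ε < 1) (hlamε : ε ^ 2 < lam 1) (hγε : ε ^ 2 < γ 1)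
    (n : Fin (dEps γ ε) → ℕ) (hn : ∀ i, n i ∈ Finset.Icc 1 (jEps lam ε)) :
    (ε ^ (2 * dEps γ ε)) ^ 2 < ∏ i, lamKJ γ lam (i.1 + 1) (n i) := by
  have hD : 1 ≤ dEps γ ε := le_jEps hγ hε0 le_rfl hγε
  have hfac : ∀ i, ε ^ 4 < lamKJ γ lam (i.1 + 1) (n i) := fun i => by
    obtain ⟨hn1, hnJ⟩ := Finset.mem_Icc.1 (hn i)
    rcases hn1.eq_or_lt with hni | hni
    · rw [← hni, lamKJ_one]
      exact pow_lt_one₀ hε0.le hε1 four_ne_zero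
    · rw [lamKJ_of_ne_one hni.ne', show ε ^ 4 = ε ^ 2 * ε ^ 2 by ring]
      exact mul_lt_mul'' (lt_of_le_jEps hγ hε0 hγ_anti hγε (by omega) i.2)
        (lt_of_le_jEps hlam hε0 hlam_anti hlamε hn1 hnJ) (by positivity) (by positivity)
  have : Nonempty (Fin (dEps γ ε)) := ⟨⟨0, hD⟩⟩
  calc (ε ^ (2 * dEps γ ε)) ^ 2 = ∏ _i : Fin (dEps γ ε), ε ^ 4 := by
        rw [Finset.prod_const, Finset.card_univ, Fintype.card_fin, ← pow_mul, ← pow_mul]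
        ring_nf
    _ < ∏ i, lamKJ γ lam (i.1 + 1) (n i) :=
        Finset.prod_lt_prod_of_nonempty (fun _ _ => by positivity) (fun i _ => hfac i)
          Finset.univ_nonempty

end Counting

def tractabilityRatio (γ lam : ℕ → ℝ) (ε : ℝ) : ℝ :=
  (dEps γ ε : ℝ) * log (jEps lam ε) / log (log ε⁻¹)

theorem eventually_tractabilityRatio_nonneg {γ lam : ℕ → ℝ} :
    ∀ᶠ ε in 𝓝[>] 0, 0 ≤ tractabilityRatio γ lam ε := by
  filter_upwards [tendsto_log_log_inv_nhdsGT_zero.eventually_ge_atTop 0] with ε hε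
  exact div_nonneg (mul_nonneg (Nat.cast_nonneg _) (log_natCast_nonneg _)) hε

section Necessity

variable {γ lam : ℕ → ℝ} {ε p : ℝ}

theorem ExpSPT.exists_forall_infoN_le (h : ExpSPT γ lam) (hε0 : 0 < ε) (hε1 : ε ≤ 1) :
    ∃ N : ℕ, ∀ d, 1 ≤ d → infoN γ lam ε d ≤ N := by
  obtain ⟨p, -, C, -, hC⟩ := h
  refine ⟨⌈C * (1 + log ε⁻¹) ^ p⌉₊, fun d hd => ?_⟩
  have := (hC d hd ε hε0 hε1).trans (ENNReal.ofReal_le_ofReal (Nat.le_ceil _))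
  rwa [ENNReal.ofReal_natCast, ← ENat.toENNReal_coe, ENat.toENNReal_le] at this

theorem ExpSPT.tendsto_lam (h : ExpSPT γ lam) (hγ1 : 0 < γ 1) (hanti : AntitoneOn lam (Ici 1))
    (hnonneg : ∀ j, 1 ≤ j → 0 ≤ lam j) : Tendsto lam atTop (𝓝 0) := by
  refine tendsto_zero_of_antitoneOn hanti hnonneg fun c hc => ?_
  by_contra! hlam
  obtain ⟨ε, hε2, hε⟩ :=
    ((eventually_sq_lt (mul_pos hγ1 hc)).and (Ioo_mem_nhdsGT one_pos)).exists
  obtain ⟨N, hN⟩ := h.exists_forall_infoN_le hε.1 hε.2.le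
  have htop : infoN γ lam ε 1 = ⊤ := infoN_one_eq_top fun j hj =>
    hε2.trans_le (mul_le_mul_of_nonneg_left (hlam j (by omega)) hγ1.le)
  simpa [htop] using hN 1 le_rfl

theorem ExpSPT.tendsto_γ (h : ExpSPT γ lam) (hlam2 : 0 < lam 2) (hanti : AntitoneOn γ (Ici 1))
    (hpos : ∀ k, 1 ≤ k → 0 < γ k) : Tendsto γ atTop (𝓝 0) := by
  refine tendsto_zero_of_antitoneOn hanti (fun k hk => (hpos k hk).le) fun c hc => ?_
  by_contra! hγ
  obtain ⟨ε, hε2, hε⟩ :=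
    ((eventually_sq_lt (mul_pos hc hlam2)).and (Ioo_mem_nhdsGT one_pos)).exists
  obtain ⟨N, hN⟩ := h.exists_forall_infoN_le hε.1 hε.2.le
  have hle := (le_infoN_of_lt_mul (fun k hk => hε2.trans_le
    (mul_le_mul_of_nonneg_right (hγ k hk) hlam2.le)) (N + 1)).trans (hN (N + 1) (by omega))
  norm_cast at hle
  omega

theorem ExpSPTwith.exists_eventually_mul_log_jEps_le (h : ExpSPTwith γ lam p)
    (hlam : Tendsto lam atTop (𝓝 0)) (hγ : Tendsto γ atTop (𝓝 0))
    (hlam_anti : AntitoneOn lam (Ici 1)) (hγ_anti : AntitoneOn γ (Ici 1))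
    (hlam1 : lam 1 = 1) (hγ1 : 0 < γ 1) :
    ∃ C, ∀ᶠ ε in 𝓝[>] 0,
      (dEps γ ε : ℝ) * log (jEps lam ε) ≤ log C + p * log (1 + 2 * dEps γ ε * log ε⁻¹) := by
  obtain ⟨C, hC0, hC⟩ := h
  refine ⟨max C 1, ?_⟩
  filter_upwards [Ioo_mem_nhdsGT one_pos, eventually_sq_lt hγ1] with ε ⟨hε0, hε1⟩ hγε
  set D := dEps γ ε
  set J := jEps lam ε
  have hlamε : ε ^ 2 < lam 1 := by rw [hlam1]; exact pow_lt_one₀ hε0.le hε1 two_ne_zero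
  have hJ : 1 ≤ J := le_jEps hlam hε0 le_rfl hlamε
  have hlow : ((J ^ D : ℕ) : ℕ∞) ≤ infoN γ lam (ε ^ (2 * D)) D :=
    pow_le_infoN (sq_pow_lt_prod_lamKJ hlam hγ hlam_anti hγ_anti hε0 hε1 hlamε hγε)
  have hup := hC D (le_jEps hγ hε0 le_rfl hγε) (ε ^ (2 * D)) (by positivity)
    (pow_le_one₀ hε0.le hε1.le)
  have hlogε : log (ε ^ (2 * D))⁻¹ = 2 * D * log ε⁻¹ := by
    rw [log_inv, log_pow, log_inv]; push_cast; ring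
  rw [hlogε] at hup
  have hL : 0 ≤ log ε⁻¹ := log_nonneg (one_le_inv_iff₀.2 ⟨hε0, hε1.le⟩)
  have hbase : 0 < 1 + 2 * (D : ℝ) * log ε⁻¹ := by positivity
  have hreal : ((J ^ D : ℕ) : ℝ) ≤ max C 1 * (1 + 2 * D * log ε⁻¹) ^ p := by
    refine (ENat.natCast_le_of_le_ofReal hlow hup ?_).trans ?_
    · positivity
    · exact mul_le_mul_of_nonneg_right (le_max_left _ _) (rpow_nonneg hbase.le _)
  have := log_le_log (by positivity) hreal
  rwa [log_mul (by positivity) (by positivity), log_rpow hbase, Nat.cast_pow, log_pow] at this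

theorem ExpSPTwith.isBoundedUnder_and_limsup_le (h : ExpSPTwith γ lam p) (hp : 0 ≤ p)
    (hlam : Tendsto lam atTop (𝓝 0)) (hγ : Tendsto γ atTop (𝓝 0))
    (hlam_anti : AntitoneOn lam (Ici 1)) (hγ_anti : AntitoneOn γ (Ici 1))
    (hlam1 : lam 1 = 1) (hlam2 : 0 < lam 2) (hγ1 : 0 < γ 1) :
    IsBoundedUnder (· ≤ ·) (𝓝[>] 0) (tractabilityRatio γ lam) ∧
      limsup (tractabilityRatio γ lam) (𝓝[>] 0) ≤ p := by
  obtain ⟨C, hC⟩ := h.exists_eventually_mul_log_jEps_le hlam hγ hlam_anti hγ_anti hlam1 hγ1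
  obtain ⟨T, hT⟩ := exists_mul_log_le_of_mul_log_le C hp
  set g : ℝ → ℝ := fun y => (log C + 2 * p * log y + p * y) / y
  have hle : ∀ᶠ ε in 𝓝[>] 0, tractabilityRatio γ lam ε ≤ g (log (log ε⁻¹)) := by
    filter_upwards [self_mem_nhdsWithin, hC, eventually_sq_lt hlam2,
      tendsto_log_inv_nhdsGT_zero.eventually_ge_atTop 1,
      tendsto_log_log_inv_nhdsGT_zero.eventually_ge_atTop (max T 0)]
      with ε hε hCε hlamε hL hLL
    have hJ : (2 : ℝ) ≤ jEps lam ε := by exact_mod_cast le_jEps hlam hε (by norm_num) hlamε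
    exact div_le_div_of_nonneg_right
      (hT _ _ _ (Nat.cast_nonneg _) hJ hL ((le_max_left _ _).trans hLL) hCε)
      ((le_max_right _ _).trans hLL)
  have hg : Tendsto (fun ε : ℝ => g (log (log ε⁻¹))) (𝓝[>] 0) (𝓝 p) :=
    (tendsto_add_mul_log_add_mul_div_atTop _ _ _).comp tendsto_log_log_inv_nhdsGT_zero
  refine ⟨hg.isBoundedUnder_le.mono_le hle, hg.limsup_eq ▸ limsup_le_limsup hle ?_
    hg.isBoundedUnder_le⟩
  exact isCoboundedUnder_le_of_eventually_le _ eventually_tractabilityRatio_nonneg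

end Necessity

section Sufficiency

variable {γ lam : ℕ → ℝ}

theorem expSPTwith_of_limsup_lt (hlam : Tendsto lam atTop (𝓝 0)) (hγ : Tendsto γ atTop (𝓝 0))
    (hlam01 : ∀ j, 1 ≤ j → lam j ∈ Icc 0 1) (hγ01 : ∀ k, 1 ≤ k → γ k ∈ Icc 0 1)
    (hlam1 : lam 1 = 1) (hB : IsBoundedUnder (· ≤ ·) (𝓝[>] 0) (tractabilityRatio γ lam))
    {p : ℝ} (hp0 : 0 ≤ p) (hp : limsup (tractabilityRatio γ lam) (𝓝[>] 0) < p) :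
    ExpSPTwith γ lam p := by
  have hlt_lam1 : ∀ ε, 0 < ε → ε < 1 → ε ^ 2 < lam 1 := fun ε hε0 hε1 => by
    rw [hlam1]; exact pow_lt_one₀ hε0.le hε1 two_ne_zero
  obtain ⟨ε₁, hε₁, hsmall⟩ := mem_nhdsGT_iff_exists_Ioc_subset.1
    (((eventually_lt_of_limsup_lt hp hB).and
      (tendsto_log_log_inv_nhdsGT_zero.eventually_gt_atTop 0)).and (Ioo_mem_nhdsGT one_pos))
  obtain ⟨-, hε₁1⟩ := (hsmall ⟨hε₁, le_rfl⟩).2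
  have hC : 1 ≤ ((jEps lam ε₁ ^ dEps γ ε₁ : ℕ) : ℝ) := by
    exact_mod_cast Nat.one_le_pow _ _ (le_jEps hlam hε₁ le_rfl (hlt_lam1 ε₁ hε₁ hε₁1))
  refine ⟨_, zero_le_one.trans hC, fun d _ ε hε0 hε1 => ?_⟩
  have hL : 0 ≤ log ε⁻¹ := log_nonneg (one_le_inv_iff₀.2 ⟨hε0, hε1⟩)
  have hpow : 1 ≤ (1 + log ε⁻¹) ^ p := one_le_rpow (by linarith) hp0
  rcases le_or_gt ε ε₁ with hle | hlt
  · obtain ⟨⟨hratio, hLL⟩, -, hεlt1⟩ := hsmall ⟨hε0, hle⟩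
    have hLpos : 0 < log ε⁻¹ := hL.lt_of_ne fun h => by simp [← h] at hLL
    have hJ : 1 ≤ jEps lam ε := le_jEps hlam hε0 le_rfl (hlt_lam1 ε hε0 hεlt1)
    refine ENat.toENNReal_le_ofReal
      (infoN_le_pow_jEps hlam hγ hlam01 hγ01 hε0 (hlt_lam1 ε hε0 hεlt1) d) ?_
    calc ((jEps lam ε ^ dEps γ ε : ℕ) : ℝ) ≤ (log ε⁻¹) ^ p :=
          natCast_pow_le_rpow_of_mul_log_le hJ hLpos ((div_lt_iff₀ hLL).1 hratio).le
      _ ≤ (1 + log ε⁻¹) ^ p := rpow_le_rpow hL (by linarith) hp0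
      _ ≤ _ := le_mul_of_one_le_left (by positivity) hC
  · refine ENat.toENNReal_le_ofReal ((infoN_anti hε₁.le hlt.le).trans
      (infoN_le_pow_jEps hlam hγ hlam01 hγ01 hε₁ (hlt_lam1 ε₁ hε₁ hε₁1) d)) ?_
    exact le_mul_of_one_le_right (by positivity) hpow

end Sufficiency

/-- EXP-SPT holds iff λ_j → 0, γ_j → 0 and
B = limsup_{ε→0⁺} d(ε)·log j(ε) / log log ε⁻¹ < ∞; in that case the exponent p* of
EXP-SPT equals B. -/
theorem stmt0 (γ lam : ℕ → ℝ)
    (hlam_anti : AntitoneOn lam (Set.Ici 1)) (hlam1 : lam 1 = 1) (hlam2 : 0 < lam 2)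
    (hlam_nonneg : ∀ j, 1 ≤ j → 0 ≤ lam j)
    (hγ_anti : AntitoneOn γ (Set.Ici 1))
    (hγ_pos : ∀ j, 1 ≤ j → 0 < γ j) (hγ_le : ∀ j, 1 ≤ j → γ j ≤ 1) :
    (ExpSPT γ lam ↔
      (Tendsto lam atTop (nhds 0) ∧ Tendsto γ atTop (nhds 0) ∧
        Filter.IsBoundedUnder (· ≤ ·) (nhdsWithin (0:ℝ) (Set.Ioi 0))
          (fun ε => (dEps γ ε : ℝ) * Real.log (jEps lam ε) / Real.log (Real.log ε⁻¹)))) ∧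
    ((Tendsto lam atTop (nhds 0) ∧ Tendsto γ atTop (nhds 0) ∧
        Filter.IsBoundedUnder (· ≤ ·) (nhdsWithin (0:ℝ) (Set.Ioi 0))
          (fun ε => (dEps γ ε : ℝ) * Real.log (jEps lam ε) / Real.log (Real.log ε⁻¹))) →
      sInf {p : ℝ | 0 ≤ p ∧ ExpSPTwith γ lam p} =
        Filter.limsup
          (fun ε => (dEps γ ε : ℝ) * Real.log (jEps lam ε) / Real.log (Real.log ε⁻¹))
          (nhdsWithin (0:ℝ) (Set.Ioi 0))) := by
  have hγ1 : 0 < γ 1 := hγ_pos 1 le_rfl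
  have hlam01 : ∀ j, 1 ≤ j → lam j ∈ Icc 0 1 := fun j hj =>
    ⟨hlam_nonneg j hj, hlam1 ▸ hlam_anti self_mem_Ici hj hj⟩
  have hγ01 : ∀ k, 1 ≤ k → γ k ∈ Icc 0 1 := fun k hk => ⟨(hγ_pos k hk).le, hγ_le k hk⟩
  have hnec : ∀ p, 0 ≤ p → ExpSPTwith γ lam p →
      Tendsto lam atTop (𝓝 0) ∧ Tendsto γ atTop (𝓝 0) ∧
        IsBoundedUnder (· ≤ ·) (𝓝[>] 0) (tractabilityRatio γ lam) ∧
          limsup (tractabilityRatio γ lam) (𝓝[>] 0) ≤ p := fun p hp h => by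
    have hlam := ExpSPT.tendsto_lam ⟨p, hp, h⟩ hγ1 hlam_anti hlam_nonneg
    have hγ := ExpSPT.tendsto_γ ⟨p, hp, h⟩ hlam2 hγ_anti hγ_pos
    exact ⟨hlam, hγ,
      h.isBoundedUnder_and_limsup_le hp hlam hγ hlam_anti hγ_anti hlam1 hlam2 hγ1⟩
  have hsuff : Tendsto lam atTop (𝓝 0) ∧ Tendsto γ atTop (𝓝 0) ∧
      IsBoundedUnder (· ≤ ·) (𝓝[>] 0) (tractabilityRatio γ lam) →
      ∀ q, limsup (tractabilityRatio γ lam) (𝓝[>] 0) < q → 0 ≤ q ∧ ExpSPTwith γ lam q :=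
    fun ⟨hlam, hγ, hB⟩ q hq =>
      have hq0 := (le_limsup_of_frequently_le
        eventually_tractabilityRatio_nonneg.frequently hB).trans_lt hq
      ⟨hq0.le, expSPTwith_of_limsup_lt hlam hγ hlam01 hγ01 hlam1 hB hq0.le hq⟩
  refine ⟨⟨fun ⟨p, hp, h⟩ => ?_, fun hB => ⟨_, hsuff hB _ (lt_add_one _)⟩⟩, fun hB => ?_⟩
  · obtain ⟨hlam, hγ, hB, -⟩ := hnec p hp h
    exact ⟨hlam, hγ, hB⟩
  · have hbdd : BddBelow {p : ℝ | 0 ≤ p ∧ ExpSPTwith γ lam p} := ⟨0, fun p hp => hp.1⟩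
    refine le_antisymm (le_of_forall_pos_le_add fun η hη => ?_) ?_
    · exact csInf_le hbdd (hsuff hB _ (lt_add_of_pos_right _ hη))
    · exact le_csInf ⟨_, hsuff hB _ (lt_add_one _)⟩ fun q ⟨hq, h⟩ => (hnec q hq h).2.2.2
end
end

section
/- Let t > 1. Then EXP-(1,t)-WT holds if and only if lim_{j→∞} (log λ_j⁻¹)/log j = ∞, i.e., for every M > 0 one has λ_j < j^{−M} for all sufficiently large j; no condition on the weights γ_j is needed. -/
open Filter Real Set Topology
open scoped ENNReal NNReal

noncomputable section

/-!
If `λ_j` decays faster than every power of `j`, then `∑_j λ_j^a < ∞` for every `a > 0`, and a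
Chebyshev count over the tensor-product eigenvalues gives `n(ε,d) ε^(2a) ≤ (∑_j λ_j^a)^d`, i.e.
`log n(ε,d) ≤ C_a d + 2a log ε⁻¹`. Since `t > 1`, the term `C_a d` is negligible against `d^t`
unless `d` stays bounded, in which case it is negligible against `log ε⁻¹`; as `a` is arbitrary,
EXP-(1,t)-WT follows. Conversely, if `λ_j ≥ j^(-M)` for infinitely many `j`, then for `d = 1` and
`ε² ≈ γ_1 j^(-M)` all indices `1,…,j` are admissible, so `log n(ε,1) ≥ log j ≈ (2/M) log ε⁻¹`,
which violates weak tractability with `δ = 1/M`.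
-/

open Finset in
theorem ENNReal.tsum_prod_le_prod_tsum {ι κ : Type*} [Fintype ι] [DecidableEq ι]
    (w : ι → κ → ℝ≥0∞) : ∑' n : ι → κ, ∏ i, w i (n i) ≤ ∏ i, ∑' j, w i j := by
  classical
  refine ENNReal.summable.tsum_le_of_sum_le fun s ↦ ?_
  calc ∑ n ∈ s, ∏ i, w i (n i)
      ≤ ∑ n ∈ Fintype.piFinset fun i ↦ s.image (· i), ∏ i, w i (n i) :=
        sum_le_sum_of_subset fun n hn ↦ Fintype.mem_piFinset.2 fun i ↦ mem_image_of_mem _ hn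
    _ = ∏ i, ∑ j ∈ s.image (· i), w i j := (prod_univ_sum _ _).symm
    _ ≤ ∏ i, ∑' j, w i j := prod_le_prod' fun i _ ↦ ENNReal.sum_le_tsum _

theorem Set.encard_mul_le_tsum {α : Type*} (A : Set α) (f : α → ℝ≥0∞) (c : ℝ≥0∞)
    (hA : ∀ n ∈ A, c ≤ f n) : A.encard * c ≤ ∑' n, f n := by
  rw [← ENNReal.tsum_set_const]
  exact (ENNReal.tsum_le_tsum fun n : A ↦ hA n n.2).trans
    (ENNReal.tsum_comp_le_tsum_of_injective Subtype.val_injective f)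

def DecaysFasterThanAnyPower (f : ℕ → ℝ) : Prop :=
  ∀ M : ℝ, 0 < M → ∀ᶠ j : ℕ in atTop, f j < (j : ℝ) ^ (-M)

theorem DecaysFasterThanAnyPower.tsum_ofReal_rpow_ne_top {f : ℕ → ℝ}
    (hf : DecaysFasterThanAnyPower f) {a : ℝ} (ha : 0 < a) :
    ∑' j, ENNReal.ofReal (f j) ^ a ≠ ⊤ := by
  have hsum : Summable fun j ↦ max (f j) 0 ^ a := by
    refine (Real.summable_nat_rpow.2 (by norm_num : (-2 : ℝ) < -1)).of_norm_bounded_eventually_nat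
      ?_
    filter_upwards [hf (2 / a) (by positivity), eventually_gt_atTop 0] with j hj hj0
    have hj0' : (0 : ℝ) < j := by exact_mod_cast hj0
    rw [Real.norm_of_nonneg (by positivity)]
    calc max (f j) 0 ^ a ≤ ((j : ℝ) ^ (-(2 / a))) ^ a :=
          Real.rpow_le_rpow (le_max_right _ _) (max_le hj.le (by positivity)) ha.le
      _ = (j : ℝ) ^ (-2 : ℝ) := by rw [← Real.rpow_mul hj0'.le]; field_simp
  have hterm (j : ℕ) : ENNReal.ofReal (f j) ^ a = ENNReal.ofReal (max (f j) 0 ^ a) := by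
    rw [← ENNReal.ofReal_rpow_of_nonneg (le_max_right _ _) ha.le, ENNReal.ofReal_max,
      ENNReal.ofReal_zero, max_eq_left zero_le]
  simp_rw [hterm, ← ENNReal.ofReal_tsum_of_nonneg (fun j ↦ by positivity) hsum]
  exact ENNReal.ofReal_ne_top

theorem exists_natCast_mul_le_rpow_add_log {t : ℝ} (ht : 1 < t) {K η : ℝ} (hK : 0 ≤ K)
    (hη : 0 < η) :
    ∃ T : ℝ, ∀ d : ℕ, ∀ ε : ℝ, 0 < ε → ε ≤ 1 → T ≤ d + ε⁻¹ →
      d * K ≤ η * ((d : ℝ) ^ t + Real.log ε⁻¹) := by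
  have hlim : Tendsto (fun d : ℕ ↦ η * (d : ℝ) ^ (t - 1)) atTop atTop :=
    ((tendsto_rpow_atTop (by linarith)).comp tendsto_natCast_atTop_atTop).const_mul_atTop hη
  obtain ⟨D, hD⟩ := eventually_atTop.1 (hlim.eventually_ge_atTop K)
  refine ⟨D + Real.exp (D * K / η), fun d ε hε hε1 hT ↦ ?_⟩
  have hL : 0 ≤ Real.log ε⁻¹ := Real.log_nonneg ((one_le_inv₀ hε).2 hε1)
  rcases le_or_gt D d with hd | hd
  · have hdt : (d : ℝ) ^ t = d * (d : ℝ) ^ (t - 1) := by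
      rw [← Real.rpow_one_add' (Nat.cast_nonneg d) (by linarith)]; ring_nf
    calc d * K ≤ d * (η * (d : ℝ) ^ (t - 1)) := by gcongr; exact hD d hd
      _ = η * (d : ℝ) ^ t := by rw [hdt]; ring
      _ ≤ η * ((d : ℝ) ^ t + Real.log ε⁻¹) := by gcongr; linarith
  · have hdD : (d : ℝ) ≤ D := by exact_mod_cast hd.le
    have hexp : D * K / η ≤ Real.log ε⁻¹ := by
      rw [Real.le_log_iff_exp_le (by positivity)]
      linarith
    calc d * K ≤ D * K := by gcongr
      _ = η * (D * K / η) := by field_simp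
      _ ≤ η * ((d : ℝ) ^ t + Real.log ε⁻¹) := by
        gcongr; linarith [Real.rpow_nonneg (Nat.cast_nonneg d) t]

section Eigenvalues

variable {γ lam : ℕ → ℝ} {k : ℕ}

theorem lamKJ_nonneg (hlam : ∀ j, 1 ≤ j → 0 ≤ lam j) (hγ : 0 ≤ γ k) {j : ℕ} (hj : 1 ≤ j) :
    0 ≤ lamKJ γ lam k j := by
  unfold lamKJ
  split_ifs
  exacts [zero_le_one, mul_nonneg hγ (hlam j hj)]

theorem ofReal_lamKJ_le (hlam1 : lam 1 = 1) (hγ0 : 0 ≤ γ k) (hγ1 : γ k ≤ 1) (j : ℕ) :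
    ENNReal.ofReal (lamKJ γ lam k j) ≤ ENNReal.ofReal (lam j) := by
  unfold lamKJ
  split_ifs with hj
  · rw [hj, hlam1]
  · refine ENNReal.ofReal_le_ofReal_iff'.2 ?_
    rcases le_total 0 (lam j) with h | h
    · exact .inl (mul_le_of_le_one_left h hγ1)
    · exact .inr (mul_nonpos_of_nonneg_of_nonpos hγ0 h)

theorem infoN_mul_rpow_le (hlam1 : lam 1 = 1) (hlam : ∀ j, 1 ≤ j → 0 ≤ lam j)
    (hγ0 : ∀ k, 1 ≤ k → 0 ≤ γ k) (hγ1 : ∀ k, 1 ≤ k → γ k ≤ 1) {a : ℝ} (ha : 0 ≤ a)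
    (ε : ℝ) (d : ℕ) :
    (infoN γ lam ε d : ℝ≥0∞) * ENNReal.ofReal (ε ^ 2) ^ a ≤
      (∑' j, ENNReal.ofReal (lam j) ^ a) ^ d := by
  calc (infoN γ lam ε d : ℝ≥0∞) * ENNReal.ofReal (ε ^ 2) ^ a
      ≤ ∑' n : Fin d → ℕ, ∏ i : Fin d, ENNReal.ofReal (lamKJ γ lam (i.1 + 1) (n i)) ^ a := by
        refine Set.encard_mul_le_tsum _ _ _ fun n ⟨hn1, hn⟩ ↦ ?_
        rw [ENNReal.prod_rpow_of_nonneg ha, ← ENNReal.ofReal_prod_of_nonneg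
          fun i _ ↦ lamKJ_nonneg hlam (hγ0 _ i.1.succ_pos) (hn1 i)]
        exact ENNReal.rpow_le_rpow (ENNReal.ofReal_le_ofReal hn.le) ha
    _ ≤ ∏ i : Fin d, ∑' j, ENNReal.ofReal (lamKJ γ lam (i.1 + 1) j) ^ a :=
        ENNReal.tsum_prod_le_prod_tsum _
    _ ≤ ∏ _i : Fin d, ∑' j, ENNReal.ofReal (lam j) ^ a :=
        Finset.prod_le_prod' fun i _ ↦ ENNReal.tsum_le_tsum fun j ↦ ENNReal.rpow_le_rpow
          (ofReal_lamKJ_le hlam1 (hγ0 _ i.1.succ_pos) (hγ1 _ i.1.succ_pos) j) ha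
    _ = _ := by rw [Finset.prod_const, Finset.card_univ, Fintype.card_fin]

theorem DecaysFasterThanAnyPower.exists_log_infoN_le (hdecay : DecaysFasterThanAnyPower lam)
    (hlam1 : lam 1 = 1) (hlam : ∀ j, 1 ≤ j → 0 ≤ lam j) (hγ0 : ∀ k, 1 ≤ k → 0 ≤ γ k)
    (hγ1 : ∀ k, 1 ≤ k → γ k ≤ 1) {a : ℝ} (ha : 0 < a) :
    ∃ K : ℝ, 0 ≤ K ∧ ∀ (d : ℕ) (ε : ℝ), 0 < ε → ε ≤ 1 →
      ∃ N : ℕ, infoN γ lam ε d = N ∧ Real.log (max 1 (N : ℝ)) ≤ d * K + 2 * a * Real.log ε⁻¹ := by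
  set S := ∑' j, ENNReal.ofReal (lam j) ^ a
  have hS : S ≠ ⊤ := hdecay.tsum_ofReal_rpow_ne_top ha
  have hS1 : 1 ≤ S := by
    simpa [hlam1] using ENNReal.le_tsum (f := fun j ↦ ENNReal.ofReal (lam j) ^ a) 1
  have hR1 : 1 ≤ S.toReal := by simpa using ENNReal.toReal_mono hS hS1
  refine ⟨Real.log S.toReal, Real.log_nonneg hR1, fun d ε hε hε1 ↦ ?_⟩
  have hbound := infoN_mul_rpow_le hlam1 hlam hγ0 hγ1 ha.le ε d
  have hc : ENNReal.ofReal (ε ^ 2) ^ a ≠ 0 := by positivity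
  obtain ⟨N, hN⟩ : ∃ N : ℕ, (N : ℕ∞) = infoN γ lam ε d := by
    refine ENat.ne_top_iff_exists.1 fun htop ↦ ?_
    rw [htop, ENat.toENNReal_top, ENNReal.top_mul hc] at hbound
    exact ENNReal.pow_ne_top hS (top_le_iff.1 hbound)
  refine ⟨N, hN.symm, ?_⟩
  have hreal : (N : ℝ) * (ε ^ 2) ^ a ≤ S.toReal ^ d := by
    rw [← hN, ENat.toENNReal_coe] at hbound
    simpa [← ENNReal.toReal_rpow, ENNReal.toReal_ofReal (sq_nonneg ε)] using
      ENNReal.toReal_mono (ENNReal.pow_ne_top hS) hbound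
  have hε2a : 0 < (ε ^ 2) ^ a := by positivity
  have hmax : max 1 (N : ℝ) * (ε ^ 2) ^ a ≤ S.toReal ^ d := by
    refine max_mul_of_nonneg _ _ hε2a.le ▸ max_le ?_ hreal
    rw [one_mul]
    exact (Real.rpow_le_one (by positivity) (by nlinarith [sq_nonneg ε]) ha.le).trans
      (one_le_pow₀ hR1)
  have hlog := Real.log_le_log (by positivity) hmax
  rw [Real.log_mul (by positivity) hε2a.ne', Real.log_rpow (by positivity), Real.log_pow,
    Real.log_pow] at hlog
  rw [Real.log_inv]
  push_cast at hlog
  linarith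

theorem natCast_le_infoN_one (hlam : AntitoneOn lam (Ici 1)) (hγ : 0 ≤ γ 1) {ε : ℝ} {j : ℕ}
    (hε1 : ε ^ 2 < 1) (hεj : ε ^ 2 < γ 1 * lam j) : (j : ℕ∞) ≤ infoN γ lam ε 1 := by
  calc (j : ℕ∞) = (Icc 1 j).encard := by
        rw [← Finset.coe_Icc, Set.encard_coe_eq_coe_finsetCard, Nat.card_Icc, Nat.add_sub_cancel]
    _ ≤ infoN γ lam ε 1 := by
      refine Set.encard_le_encard_of_injOn (f := fun v _ ↦ v) (fun v ⟨hv1, hvj⟩ ↦ ?_)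
        fun v _ w _ h ↦ congrFun h 0
      refine ⟨fun _ ↦ hv1, ?_⟩
      simp only [Fin.prod_univ_one, Fin.val_zero, zero_add, lamKJ]
      split_ifs with hv
      · exact hε1
      · exact hεj.trans_le (mul_le_mul_of_nonneg_left
          (hlam (mem_Ici.2 hv1) (mem_Ici.2 (hv1.trans hvj)) hvj) hγ)

theorem exists_natCast_le_infoN_one (hlam : AntitoneOn lam (Ici 1)) (hγ0 : 0 < γ 1)
    (hγ1 : γ 1 ≤ 1) {M : ℝ} (hM : 0 < M) {j : ℕ} (hj1 : 1 ≤ j) (hlamj : (j : ℝ) ^ (-M) ≤ lam j) :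
    ∃ ε : ℝ, 0 < ε ∧ ε ≤ 1 ∧ Real.log ε⁻¹ = (M * Real.log j - Real.log (γ 1 / 2)) / 2 ∧
      (j : ℕ∞) ≤ infoN γ lam ε 1 := by
  have hj : (1 : ℝ) ≤ j := by exact_mod_cast hj1
  have hjM0 : 0 < (j : ℝ) ^ (-M) := by positivity
  have hjM1 : (j : ℝ) ^ (-M) ≤ 1 := Real.rpow_le_one_of_one_le_of_nonpos hj (by linarith)
  have hx : 0 < γ 1 / 2 * (j : ℝ) ^ (-M) := by positivity
  have hε2 : √(γ 1 / 2 * (j : ℝ) ^ (-M)) ^ 2 = γ 1 / 2 * (j : ℝ) ^ (-M) := Real.sq_sqrt hx.le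
  have hε2_lt : √(γ 1 / 2 * (j : ℝ) ^ (-M)) ^ 2 < 1 := by rw [hε2]; nlinarith
  refine ⟨_, Real.sqrt_pos.2 hx, Real.sqrt_le_one.2 (by nlinarith), ?_,
    natCast_le_infoN_one hlam hγ0.le hε2_lt ?_⟩
  · rw [Real.log_inv, Real.log_sqrt hx.le, Real.log_mul (by positivity) hjM0.ne',
      Real.log_rpow (by positivity)]
    ring
  · rw [hε2]
    calc γ 1 / 2 * (j : ℝ) ^ (-M) < γ 1 * (j : ℝ) ^ (-M) := by gcongr; exact half_lt_self hγ0
      _ ≤ γ 1 * lam j := by gcongr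

theorem ExpSTWT.decaysFasterThanAnyPower (hlam : AntitoneOn lam (Ici 1)) (hγ0 : 0 < γ 1)
    (hγ1 : γ 1 ≤ 1) {t : ℝ} (h : ExpSTWT γ lam 1 t) : DecaysFasterThanAnyPower lam := by
  intro M hM
  by_contra hcon
  have hfreq : ∃ᶠ j : ℕ in atTop, (j : ℝ) ^ (-M) ≤ lam j := by
    simpa only [not_lt] using not_eventually.1 hcon
  obtain ⟨T, hT⟩ := h (1 / M) (by positivity)
  have hlogc : Real.log (γ 1 / 2) < 0 := Real.log_neg (by positivity) (by linarith)
  have hlim : Tendsto (fun j : ℕ ↦ (M * Real.log j - Real.log (γ 1 / 2)) / 2) atTop atTop :=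
    (tendsto_atTop_add_const_right _ _ <| (Real.tendsto_log_atTop.comp
      tendsto_natCast_atTop_atTop).const_mul_atTop hM).atTop_div_const two_pos
  obtain ⟨j, hlamj, hj1, hjT, hjc⟩ := (hfreq.and_eventually ((eventually_ge_atTop 1).and
    ((hlim.eventually_ge_atTop (T - 1)).and
      (hlim.eventually_ge_atTop (2 - Real.log (γ 1 / 2)))))).exists
  obtain ⟨ε, hε, hε1, hL, hjN⟩ := exists_natCast_le_infoN_one hlam hγ0 hγ1 hM hj1 hlamj
  have hTε : T ≤ 1 + ε⁻¹ := by linarith [Real.log_le_sub_one_of_pos (inv_pos.2 hε)]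
  obtain ⟨N, hN, hlt⟩ := hT 1 le_rfl ε hε hε1 (by simpa using hTε)
  have hlogN : Real.log j ≤ Real.log (max 1 (N : ℝ)) := by
    have hjN : (j : ℝ) ≤ N := by exact_mod_cast hN ▸ hjN
    exact Real.log_le_log (by positivity) (hjN.trans (le_max_right _ _))
  rw [Nat.cast_one, Real.one_rpow, Real.rpow_one, hL, div_lt_iff₀ (by linarith)] at hlt
  have : 1 / M * (1 + (1 + (M * Real.log j - Real.log (γ 1 / 2)) / 2)) ≤ Real.log j := by
    rw [div_mul_eq_mul_div, one_mul, div_le_iff₀ hM]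
    linarith
  linarith

theorem ExpSTWT.of_decaysFasterThanAnyPower (hlam1 : lam 1 = 1) (hlam : ∀ j, 1 ≤ j → 0 ≤ lam j)
    (hγ0 : ∀ k, 1 ≤ k → 0 ≤ γ k) (hγ1 : ∀ k, 1 ≤ k → γ k ≤ 1) {t : ℝ} (ht : 1 < t)
    (hdecay : DecaysFasterThanAnyPower lam) : ExpSTWT γ lam 1 t := by
  intro δ hδ
  obtain ⟨K, hK, hinfoN⟩ := hdecay.exists_log_infoN_le hlam1 hlam hγ0 hγ1 (a := δ / 4)
    (by positivity)
  obtain ⟨T, hT⟩ := exists_natCast_mul_le_rpow_add_log ht hK (half_pos hδ)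
  refine ⟨T, fun d _ ε hε hε1 hdε ↦ ?_⟩
  obtain ⟨N, hN, hlog⟩ := hinfoN d ε hε hε1
  refine ⟨N, hN, ?_⟩
  have hdK := hT d ε hε hε1 hdε
  have hL : 0 ≤ Real.log ε⁻¹ := Real.log_nonneg ((one_le_inv₀ hε).2 hε1)
  have hdt : 0 ≤ δ * (d : ℝ) ^ t := by positivity
  rw [Real.rpow_one, div_lt_iff₀ (by positivity)]
  linarith

end Eigenvalues

theorem stmt5_general (γ lam : ℕ → ℝ)
    (hlam_anti : AntitoneOn lam (Set.Ici 1)) (hlam1 : lam 1 = 1)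
    (hlam_nonneg : ∀ j, 1 ≤ j → 0 ≤ lam j)
    (hγ_pos : ∀ j, 1 ≤ j → 0 < γ j) (hγ_le : ∀ j, 1 ≤ j → γ j ≤ 1)
    (t : ℝ) (ht : 1 < t) :
    ExpSTWT γ lam 1 t ↔
      (∀ M : ℝ, 0 < M → ∀ᶠ j : ℕ in atTop, lam j < (j : ℝ) ^ (-M)) :=
  ⟨ExpSTWT.decaysFasterThanAnyPower hlam_anti (hγ_pos 1 le_rfl) (hγ_le 1 le_rfl),
    ExpSTWT.of_decaysFasterThanAnyPower hlam1 hlam_nonneg (fun k hk ↦ (hγ_pos k hk).le) hγ_le ht⟩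

/-- for t > 1, EXP-(1,t)-WT holds iff for every M > 0 one eventually has
λ_j < j^(-M); no condition on the weights γ_j is needed. -/
theorem stmt5 (γ lam : ℕ → ℝ)
    (hlam_anti : AntitoneOn lam (Set.Ici 1)) (hlam1 : lam 1 = 1) (hlam2 : 0 < lam 2)
    (hlam_nonneg : ∀ j, 1 ≤ j → 0 ≤ lam j)
    (hγ_anti : AntitoneOn γ (Set.Ici 1))
    (hγ_pos : ∀ j, 1 ≤ j → 0 < γ j) (hγ_le : ∀ j, 1 ≤ j → γ j ≤ 1)
    (t : ℝ) (ht : 1 < t) :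
    ExpSTWT γ lam 1 t ↔
      (∀ M : ℝ, 0 < M → ∀ᶠ j : ℕ in atTop, lam j < (j : ℝ) ^ (-M)) :=
  stmt5_general γ lam hlam_anti hlam1 hlam_nonneg hγ_pos hγ_le t ht
end
end
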